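/- arXiv:2209.09009 — 4 statements merged into one kernel-verified Lean document; each statement's English description precedes it below -/
import Mathlib

section
/- Let α > 1 and ρ > 0, and set r = ((α − 1)/(ρ·α))^(1/α). Then the function ℓ(e) = 1 − exp(−ρ e^α) is strictly convex on the open interval (0, r); equivalently, its second derivative is strictly positive at every e with 0 < e < r. -/
open Real Set

private lemma gc_hasDerivAt (α ρ : ℝ) (hα : 1 < α) {x : ℝ} (hx : 0 < x) :
    HasDerivAt (fun e : ℝ => 1 - Real.exp (-(ρ * e ^ α)))
      (ρ * α * x ^ (α - 1) * Real.exp (-(ρ * x ^ α))) x := by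
  have h1 : HasDerivAt (fun e : ℝ => e ^ α) (α * x ^ (α - 1)) x :=
    Real.hasDerivAt_rpow_const (Or.inl hx.ne')
  have h2 := ((h1.const_mul ρ).neg).exp
  have h3 := (h2.const_sub 1)
  refine h3.congr_deriv ?_
  simp only [Pi.neg_apply]
  ring

private lemma gc_deriv2 (α ρ : ℝ) (hα : 1 < α) {x : ℝ} (hx : 0 < x) :
    HasDerivAt (fun e : ℝ => ρ * α * e ^ (α - 1) * Real.exp (-(ρ * e ^ α)))
      (ρ * α * Real.exp (-(ρ * x ^ α)) * (x ^ (α - 2) * ((α - 1) - ρ * α * x ^ α))) x := by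
  have h1 : HasDerivAt (fun e : ℝ => e ^ (α - 1)) ((α - 1) * x ^ (α - 1 - 1)) x :=
    Real.hasDerivAt_rpow_const (Or.inl hx.ne')
  have hα' : HasDerivAt (fun e : ℝ => e ^ α) (α * x ^ (α - 1)) x :=
    Real.hasDerivAt_rpow_const (Or.inl hx.ne')
  have h2 := ((hα'.const_mul ρ).neg).exp
  have h := ((h1.const_mul (ρ * α)).mul h2)
  refine h.congr_deriv ?_
  simp only [Pi.neg_apply]
  symm
  have hAA : x ^ (α - 1) * x ^ (α - 1) = x ^ (α - 2) * x ^ α := by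
    rw [← Real.rpow_add hx, ← Real.rpow_add hx]; ring_nf
  have h12 : α - 1 - 1 = α - 2 := by ring
  rw [h12]
  linear_combination (ρ * α * ρ * α * Real.exp (-(ρ * x ^ α))) * hAA

/-- For `α > 1`, `ρ > 0` and `r = ((α − 1)/(ρ·α))^(1/α)`, the loss
`ℓ e = 1 − exp(−ρ e^α)` is strictly convex on `(0, r)`; equivalently, its second
derivative is strictly positive at every `e` with `0 < e < r`. -/
theorem gcLoss_strictConvex (α ρ : ℝ) (hα : 1 < α) (hρ : 0 < ρ) (r : ℝ)
    (hr : r = ((α - 1) / (ρ * α)) ^ (1 / α)) :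
    StrictConvexOn ℝ (Set.Ioo (0 : ℝ) r) (fun e : ℝ => 1 - Real.exp (-(ρ * e ^ α))) ∧
    ∀ e ∈ Set.Ioo (0 : ℝ) r,
      0 < deriv (deriv (fun e : ℝ => 1 - Real.exp (-(ρ * e ^ α)))) e := by
  set f : ℝ → ℝ := fun e : ℝ => 1 - Real.exp (-(ρ * e ^ α)) with hf
  have hα0 : 0 < α := by linarith
  have hα1 : 0 < α - 1 := by linarith
  have hb : 0 < (α - 1) / (ρ * α) := by positivity
  -- r ^ α = (α-1)/(ρα)
  have hrpow : r ^ α = (α - 1) / (ρ * α) := by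
    rw [hr, ← Real.rpow_mul hb.le, one_div, inv_mul_cancel₀ hα0.ne', Real.rpow_one]
  have hderiv_eq : ∀ x : ℝ, 0 < x →
      deriv f x = ρ * α * x ^ (α - 1) * Real.exp (-(ρ * x ^ α)) := fun x hx =>
    (gc_hasDerivAt α ρ hα hx).deriv
  have key : ∀ x ∈ Set.Ioo (0 : ℝ) r, 0 < deriv (deriv f) x := by
    intro x hx
    obtain ⟨hx0, hxr⟩ := hx
    have hev : deriv f =ᶠ[nhds x]
        (fun e : ℝ => ρ * α * e ^ (α - 1) * Real.exp (-(ρ * e ^ α))) := by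
      filter_upwards [isOpen_Ioi.mem_nhds (show x ∈ Set.Ioi (0:ℝ) from hx0)] with y hy
      exact hderiv_eq y hy
    rw [hev.deriv_eq, (gc_deriv2 α ρ hα hx0).deriv]
    have hxα : x ^ α < (α - 1) / (ρ * α) := by
      rw [← hrpow]
      exact Real.rpow_lt_rpow hx0.le hxr hα0
    have hlast : 0 < (α - 1) - ρ * α * x ^ α := by
      have : ρ * α * x ^ α < ρ * α * ((α - 1) / (ρ * α)) := by
        apply mul_lt_mul_of_pos_left hxα (by positivity)
      rw [mul_div_cancel₀ _ (by positivity : (ρ * α) ≠ 0)] at this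
      linarith
    have := Real.exp_pos (-(ρ * x ^ α))
    have := Real.rpow_pos_of_pos hx0 (α - 2)
    positivity
  refine ⟨?_, key⟩
  apply strictConvexOn_of_deriv2_pos (convex_Ioo 0 r)
  · intro x hx
    exact (gc_hasDerivAt α ρ hα hx.1).continuousAt.continuousWithinAt
  · intro x hx
    rw [interior_Ioo] at hx
    have := key x hx
    simpa [Function.iterate_succ, Function.comp] using this
end

section
/- Let N ≥ 1, let 0 < α < 1 and ρ > 0. Then the multivariate function F(e₁, …, e_N) = 1 − (1/N)·Σ_{i=1}^{N} exp(−ρ e_i^α) is concave on the open box (0, ∞)^N. -/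
open scoped BigOperators

lemma tgc_aux_convexOn (α ρ : ℝ) (hα0 : 0 < α) (hα1 : α < 1) (hρ : 0 < ρ) :
    ConvexOn ℝ (Set.Ici (0:ℝ)) (fun t : ℝ => Real.exp (-(ρ * t ^ α))) := by
  have hf : ConvexOn ℝ (Set.Ici (0:ℝ)) (fun t : ℝ => -(ρ * t ^ α)) := by
    have h1 : ConcaveOn ℝ (Set.Ici (0:ℝ)) (fun t : ℝ => ρ * t ^ α) := by
      simpa [smul_eq_mul] using (Real.concaveOn_rpow hα0.le hα1.le).smul (c := ρ) hρ.le
    exact h1.neg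
  refine ⟨convex_Ici 0, fun x hx y hy a b ha hb hab => ?_⟩
  calc Real.exp (-(ρ * (a • x + b • y) ^ α))
      ≤ Real.exp (a • (-(ρ * x ^ α)) + b • (-(ρ * y ^ α))) :=
        Real.exp_le_exp.2 (hf.2 hx hy ha hb hab)
    _ ≤ a • Real.exp (-(ρ * x ^ α)) + b • Real.exp (-(ρ * y ^ α)) :=
        convexOn_exp.2 (Set.mem_univ _) (Set.mem_univ _) ha hb hab

/-- For `N ≥ 1`, `0 < α < 1`, `ρ > 0`, the multivariate total
generalized correntropy loss `F(e) = 1 − (1/N)·∑ᵢ exp(−ρ eᵢ^α)` is concave on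
the open box `(0, ∞)^N`. -/
theorem tgcLoss_concaveOn (N : ℕ) (hN : 1 ≤ N) (α ρ : ℝ)
    (hα0 : 0 < α) (hα1 : α < 1) (hρ : 0 < ρ) :
    ConcaveOn ℝ {e : Fin N → ℝ | ∀ i, 0 < e i}
      (fun e : Fin N → ℝ =>
        1 - (1 / (N : ℝ)) * ∑ i, Real.exp (-(ρ * e i ^ α))) := by
  set S : Set (Fin N → ℝ) := {e : Fin N → ℝ | ∀ i, 0 < e i}
  have hS : Convex ℝ S := by
    have : S = Set.pi Set.univ (fun _ : Fin N => Set.Ioi (0:ℝ)) := by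
      ext e; simp [S, Set.mem_pi]
    rw [this]
    exact convex_pi fun i _ => convex_Ioi 0
  have hterm : ∀ i : Fin N,
      ConvexOn ℝ S (fun e : Fin N → ℝ => Real.exp (-(ρ * e i ^ α))) := by
    intro i
    have := (tgc_aux_convexOn α ρ hα0 hα1 hρ).comp_linearMap (LinearMap.proj i : (Fin N → ℝ) →ₗ[ℝ] ℝ)
    exact this.subset (fun e he => (he i).le) hS
  have hsum : ∀ s : Finset (Fin N),
      ConvexOn ℝ S (fun e : Fin N → ℝ => ∑ i ∈ s, Real.exp (-(ρ * e i ^ α))) := by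
    intro s
    classical
    induction s using Finset.induction_on with
    | empty => simpa using convexOn_const 0 hS
    | insert a s hns ih =>
        simpa [Finset.sum_insert hns, Pi.add_def] using (hterm _).add ih
  have hconv : ConvexOn ℝ S
      (fun e : Fin N → ℝ => (1 / (N : ℝ)) * ∑ i, Real.exp (-(ρ * e i ^ α))) := by
    have := (hsum Finset.univ).smul (c := 1 / (N : ℝ)) (by positivity)
    simpa [smul_eq_mul] using this
  have := (hconv.neg).add (concaveOn_const 1 hS)
  simpa [sub_eq_add_neg, add_comm, Pi.add_def, Pi.neg_def] using this
end

section
/- Let N ≥ 1, let α > 1 and ρ > 0, and set r = ((α − 1)/(ρ·α))^(1/α). Then the multivariate function F(e₁, …, e_N) = 1 − (1/N)·Σ_{i=1}^{N} exp(−ρ e_i^α) is convex on the open box (0, r)^N. -/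
open scoped BigOperators

private lemma tgc_oneD_convex (α ρ r : ℝ) (hα : 1 < α) (hρ : 0 < ρ)
    (hr : r = ((α - 1) / (ρ * α)) ^ (1 / α)) :
    ConvexOn ℝ (Set.Ioo 0 r) (fun x : ℝ => -Real.exp (-(ρ * x ^ α))) := by
  have hα0 : (0:ℝ) < α := lt_trans one_pos hα
  have hc : (0:ℝ) < (α - 1) / (ρ * α) := div_pos (by linarith) (mul_pos hρ hα0)
  have hrpow : r ^ α = (α - 1) / (ρ * α) := by
    rw [hr, ← Real.rpow_mul hc.le, one_div, inv_mul_cancel₀ hα0.ne', Real.rpow_one]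
  -- derivative of the target function
  have hderiv : ∀ x ∈ Set.Ioo (0:ℝ) r,
      HasDerivAt (fun x : ℝ => -Real.exp (-(ρ * x ^ α)))
        (ρ * (α * x ^ (α - 1)) * Real.exp (-(ρ * x ^ α))) x := by
    intro x hx
    have h1 : HasDerivAt (fun x : ℝ => x ^ α) (α * x ^ (α - 1)) x :=
      Real.hasDerivAt_rpow_const (Or.inl hx.1.ne')
    have h2 : HasDerivAt (fun x : ℝ => -(ρ * x ^ α)) (-(ρ * (α * x ^ (α - 1)))) x :=
      (h1.const_mul ρ).neg
    have h3 : HasDerivAt (fun x : ℝ => -Real.exp (-(ρ * x ^ α)))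
        (-(Real.exp (-(ρ * x ^ α)) * -(ρ * (α * x ^ (α - 1))))) x := h2.exp.neg
    convert h3 using 1
    ring
  -- the auxiliary log-transformed derivative
  set u : ℝ → ℝ := fun x => (α - 1) * Real.log x - ρ * x ^ α with hu
  have hud : ∀ x ∈ Set.Ioo (0:ℝ) r,
      HasDerivAt u ((α - 1) * x⁻¹ - ρ * (α * x ^ (α - 1))) x := by
    intro x hx
    exact ((Real.hasDerivAt_log hx.1.ne').const_mul (α - 1)).sub
      ((Real.hasDerivAt_rpow_const (Or.inl hx.1.ne')).const_mul ρ)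
  have humono : MonotoneOn u (Set.Ioo 0 r) := by
    apply monotoneOn_of_deriv_nonneg (convex_Ioo 0 r)
    · intro x hx
      exact (hud x hx).differentiableAt.continuousAt.continuousWithinAt
    · rw [interior_Ioo]
      intro x hx
      exact (hud x hx).differentiableAt.differentiableWithinAt
    · rw [interior_Ioo]
      intro x hx
      rw [(hud x hx).deriv]
      have hxa : x ^ α < (α - 1) / (ρ * α) := by
        rw [← hrpow]
        exact Real.rpow_lt_rpow hx.1.le hx.2 hα0
      have h5 : ρ * α * x ^ α < α - 1 := by
        have := (lt_div_iff₀ (mul_pos hρ hα0)).mp hxa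
        linarith
      have hxpow : x ^ (α - 1) = x ^ α / x := by
        rw [Real.rpow_sub hx.1, Real.rpow_one]
      rw [hxpow, sub_nonneg]
      rw [show ρ * (α * (x ^ α / x)) = (ρ * α * x ^ α) / x by ring,
        show (α - 1) * x⁻¹ = (α - 1) / x by ring]
      exact div_le_div_of_nonneg_right h5.le hx.1.le
  -- convexity via monotone derivative
  apply MonotoneOn.convexOn_of_deriv (convex_Ioo 0 r)
  · intro x hx
    exact (hderiv x hx).differentiableAt.continuousAt.continuousWithinAt
  · rw [interior_Ioo]
    intro x hx
    exact (hderiv x hx).differentiableAt.differentiableWithinAt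
  · rw [interior_Ioo]
    intro x hx y hy hxy
    rw [(hderiv x hx).deriv, (hderiv y hy).deriv]
    have key : ∀ t ∈ Set.Ioo (0:ℝ) r,
        ρ * (α * t ^ (α - 1)) * Real.exp (-(ρ * t ^ α)) = ρ * α * Real.exp (u t) := by
      intro t ht
      have h6 : u t = Real.log t * (α - 1) + (-(ρ * t ^ α)) := by rw [hu]; ring
      rw [h6, Real.exp_add, Real.rpow_def_of_pos ht.1]
      ring
    rw [key x hx, key y hy]
    exact mul_le_mul_of_nonneg_left (Real.exp_le_exp.2 (humono hx hy hxy))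
      (by positivity)

/-- For `N ≥ 1`, `α > 1`, `ρ > 0` and `r = ((α − 1)/(ρ·α))^(1/α)`,
the multivariate total generalized correntropy loss
`F(e) = 1 − (1/N)·∑ᵢ exp(−ρ eᵢ^α)` is convex on the open box `(0, r)^N`. -/
theorem tgcLoss_convexOn (N : ℕ) (hN : 1 ≤ N) (α ρ : ℝ)
    (hα : 1 < α) (hρ : 0 < ρ) (r : ℝ) (hr : r = ((α - 1) / (ρ * α)) ^ (1 / α)) :
    ConvexOn ℝ {e : Fin N → ℝ | ∀ i, 0 < e i ∧ e i < r}
      (fun e : Fin N → ℝ =>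
        1 - (1 / (N : ℝ)) * ∑ i, Real.exp (-(ρ * e i ^ α))) := by
  have h1d := tgc_oneD_convex α ρ r hα hρ hr
  constructor
  · have hS : {e : Fin N → ℝ | ∀ i, 0 < e i ∧ e i < r} =
        Set.univ.pi (fun _ : Fin N => Set.Ioo (0:ℝ) r) := by
      ext e; simp [Set.mem_univ_pi, Set.mem_Ioo]
    rw [hS]
    exact convex_pi fun i _ => convex_Ioo 0 r
  · intro x hx y hy a b ha hb hab
    simp only [Pi.add_apply, Pi.smul_apply, smul_eq_mul, Set.mem_setOf_eq] at *
    have hN' : (0:ℝ) ≤ 1 / (N : ℝ) := by positivity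
    have hsum : a * ∑ i, Real.exp (-(ρ * x i ^ α)) + b * ∑ i, Real.exp (-(ρ * y i ^ α)) ≤
        ∑ i, Real.exp (-(ρ * (a * x i + b * y i) ^ α)) := by
      rw [Finset.mul_sum, Finset.mul_sum, ← Finset.sum_add_distrib]
      refine Finset.sum_le_sum fun i _ => ?_
      have := h1d.2 (Set.mem_Ioo.mpr (hx i)) (Set.mem_Ioo.mpr (hy i)) ha hb hab
      simp only [smul_eq_mul] at this
      linarith
    have h7 : a * (1 - 1 / (N:ℝ) * ∑ i, Real.exp (-(ρ * x i ^ α))) +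
        b * (1 - 1 / (N:ℝ) * ∑ i, Real.exp (-(ρ * y i ^ α))) =
        (a + b) - 1 / (N:ℝ) * (a * ∑ i, Real.exp (-(ρ * x i ^ α)) +
          b * ∑ i, Real.exp (-(ρ * y i ^ α))) := by ring
    rw [h7, hab]
    have := mul_le_mul_of_nonneg_left hsum hN'
    linarith
end

section
/- Let N ≥ 1, let L be a real symmetric positive semidefinite N×N matrix, let y ∈ ℝ^N, let γ ≥ 0, α > 1, ρ > 0, and set r = ((α − 1)/(ρ·α))^(1/α). Then the cost function f(x) = (1/2)·xᵀLx + (γ/2)·(1 − (1/N)·Σ_{i=1}^{N} exp(−ρ|y_i − x_i|^α)) is convex on the open convex set {x ∈ ℝ^N : 0 < y_i − x_i < r for all i}. -/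
open scoped BigOperators
open Matrix

lemma aux_exp_convex {α ρ r : ℝ} (hα : 1 < α) (hρ : 0 < ρ)
    (hr : r = ((α - 1) / (ρ * α)) ^ (1 / α)) :
    ConvexOn ℝ (Set.Ioo (0:ℝ) r) (fun t => -Real.exp (-(ρ * t ^ α))) := by
  have hα0 : 0 < α := lt_trans one_pos hα
  have hbase : 0 < (α - 1) / (ρ * α) := div_pos (by linarith) (mul_pos hρ hα0)
  have hrα : r ^ α = (α - 1) / (ρ * α) := by
    rw [hr, ← Real.rpow_mul hbase.le, one_div, inv_mul_cancel₀ hα0.ne', Real.rpow_one]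
  have hint : interior (Set.Ioo (0:ℝ) r) = Set.Ioo 0 r := interior_Ioo
  set f' : ℝ → ℝ := fun t => Real.exp (-(ρ * t ^ α)) * (ρ * (α * t ^ (α - 1))) with hf'
  set f'' : ℝ → ℝ := fun t =>
    Real.exp (-(ρ * t ^ α)) * (-(ρ * (α * t ^ (α - 1)))) * (ρ * (α * t ^ (α - 1)))
      + Real.exp (-(ρ * t ^ α)) * (ρ * (α * ((α - 1) * t ^ (α - 1 - 1)))) with hf''
  have hd1 : ∀ t ∈ Set.Ioo (0:ℝ) r,
      HasDerivAt (fun t => -Real.exp (-(ρ * t ^ α))) (f' t) t := by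
    intro t ht
    have h1 : HasDerivAt (fun t : ℝ => t ^ α) (α * t ^ (α - 1)) t :=
      Real.hasDerivAt_rpow_const (Or.inl ht.1.ne')
    have h2 : HasDerivAt (fun t : ℝ => -(ρ * t ^ α)) (-(ρ * (α * t ^ (α - 1)))) t :=
      (h1.const_mul ρ).neg
    have h3 := h2.exp
    have h4 : HasDerivAt (fun t => -Real.exp (-(ρ * t ^ α))) _ t := h3.neg
    convert h4 using 1
    simp [hf']
  have hd2 : ∀ t ∈ Set.Ioo (0:ℝ) r, HasDerivAt f' (f'' t) t := by
    intro t ht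
    have h1 : HasDerivAt (fun t : ℝ => t ^ α) (α * t ^ (α - 1)) t :=
      Real.hasDerivAt_rpow_const (Or.inl ht.1.ne')
    have h2 : HasDerivAt (fun t : ℝ => -(ρ * t ^ α)) (-(ρ * (α * t ^ (α - 1)))) t :=
      (h1.const_mul ρ).neg
    have h3 := h2.exp
    have h5 : HasDerivAt (fun t : ℝ => t ^ (α - 1)) ((α - 1) * t ^ (α - 1 - 1)) t :=
      Real.hasDerivAt_rpow_const (Or.inl ht.1.ne')
    have h6 : HasDerivAt (fun t : ℝ => ρ * (α * t ^ (α - 1)))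
        (ρ * (α * ((α - 1) * t ^ (α - 1 - 1)))) t := (h5.const_mul α).const_mul ρ
    exact h3.mul h6
  have hnn : ∀ t ∈ Set.Ioo (0:ℝ) r, 0 ≤ f'' t := by
    intro t ht
    have ht0 : (0:ℝ) < t := ht.1
    have hE : 0 < Real.exp (-(ρ * t ^ α)) := Real.exp_pos _
    have hpow : t ^ (α - 1) * t ^ (α - 1) = t ^ α * t ^ (α - 1 - 1) := by
      rw [← Real.rpow_add ht0, ← Real.rpow_add ht0]; ring_nf
    have hB : 0 < t ^ (α - 1 - 1) := Real.rpow_pos_of_pos ht0 _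
    have hlt : ρ * α * t ^ α ≤ α - 1 := by
      have : t ^ α ≤ r ^ α := Real.rpow_le_rpow ht0.le ht.2.le hα0.le
      rw [hrα] at this
      calc ρ * α * t ^ α ≤ ρ * α * ((α - 1) / (ρ * α)) :=
            mul_le_mul_of_nonneg_left this (mul_pos hρ hα0).le
        _ = α - 1 := by field_simp
    have key : f'' t = Real.exp (-(ρ * t ^ α)) * (ρ * α) *
        (t ^ (α - 1 - 1) * ((α - 1) - ρ * α * t ^ α)) := by
      simp only [hf'']
      linear_combination (-(Real.exp (-(ρ * t ^ α)) * ρ ^ 2 * α ^ 2)) * hpow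
    rw [key]
    have : 0 ≤ t ^ (α - 1 - 1) * ((α - 1) - ρ * α * t ^ α) :=
      mul_nonneg hB.le (by linarith)
    positivity
  exact convexOn_of_hasDerivWithinAt2_nonneg (convex_Ioo 0 r)
    (fun t ht => ((hd1 t ht).continuousAt.continuousWithinAt))
    (by rw [hint]; exact fun t ht => (hd1 t ht).hasDerivWithinAt)
    (by rw [hint]; exact fun t ht => (hd2 t ht).hasDerivWithinAt)
    (by rw [hint]; exact hnn)

lemma aux_quad_convex {N : ℕ} (L : Matrix (Fin N) (Fin N) ℝ)
    (hLsymm : L.IsSymm) (hLpsd : L.PosSemidef) :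
    ConvexOn ℝ Set.univ (fun x : Fin N → ℝ => x ⬝ᵥ L.mulVec x) := by
  have hsymm : ∀ u v : Fin N → ℝ, u ⬝ᵥ L.mulVec v = v ⬝ᵥ L.mulVec u := by
    intro u v
    rw [Matrix.dotProduct_mulVec, ← Matrix.mulVec_transpose, hLsymm, dotProduct_comm]
  refine ⟨convex_univ, fun u _ v _ a b ha hb hab => ?_⟩
  have hpsd := hLpsd.dotProduct_mulVec_nonneg (u - v)
  simp only [star_trivial, RCLike.re_to_real] at hpsd
  have hexp1 : (u - v) ⬝ᵥ L.mulVec (u - v)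
      = u ⬝ᵥ L.mulVec u - 2 * (u ⬝ᵥ L.mulVec v) + v ⬝ᵥ L.mulVec v := by
    simp only [Matrix.mulVec_sub, dotProduct_sub, sub_dotProduct]
    rw [hsymm v u]; ring
  have hexp2 : (a • u + b • v) ⬝ᵥ L.mulVec (a • u + b • v)
      = a * a * (u ⬝ᵥ L.mulVec u) + 2 * (a * b) * (u ⬝ᵥ L.mulVec v)
        + b * b * (v ⬝ᵥ L.mulVec v) := by
    simp only [Matrix.mulVec_add, Matrix.mulVec_smul, dotProduct_add, add_dotProduct,
      dotProduct_smul, smul_dotProduct, smul_eq_mul]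
    rw [hsymm v u]; ring
  simp only [smul_eq_mul]
  rw [hexp2]
  have hb' : b = 1 - a := by linarith
  subst hb'
  nlinarith [mul_nonneg (mul_nonneg ha hb) hpsd]

lemma aux_sum_convex {E : Type*} [AddCommGroup E] [Module ℝ E] {s : Set E} (hs : Convex ℝ s)
    {ι : Type*} (t : Finset ι) (f : ι → E → ℝ) (hf : ∀ i ∈ t, ConvexOn ℝ s (f i)) :
    ConvexOn ℝ s (fun x => ∑ i ∈ t, f i x) := by
  classical
  induction t using Finset.induction with
  | empty => simpa using convexOn_const 0 hs
  | insert _ _ hnotmem ih =>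
    simp only [Finset.sum_insert hnotmem]
    exact (hf _ (Finset.mem_insert_self _ _)).add
      (ih fun i hi => hf i (Finset.mem_insert_of_mem hi))

/-- For a real symmetric positive semidefinite `N×N` matrix `L`,
`y ∈ ℝ^N`, `γ ≥ 0`, `α > 1`, `ρ > 0` and `r = ((α − 1)/(ρ·α))^(1/α)`, the cost
`f(x) = (1/2)·xᵀLx + (γ/2)·(1 − (1/N)·∑ᵢ exp(−ρ|yᵢ − xᵢ|^α))` is convex on the
open convex set `{x : ∀ i, 0 < yᵢ − xᵢ < r}`. -/
theorem gsrCost_convexOn (N : ℕ) (hN : 1 ≤ N) (L : Matrix (Fin N) (Fin N) ℝ)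
    (hLsymm : L.IsSymm) (hLpsd : L.PosSemidef) (y : Fin N → ℝ)
    (γ α ρ : ℝ) (hγ : 0 ≤ γ) (hα : 1 < α) (hρ : 0 < ρ) (r : ℝ)
    (hr : r = ((α - 1) / (ρ * α)) ^ (1 / α)) :
    ConvexOn ℝ {x : Fin N → ℝ | ∀ i, 0 < y i - x i ∧ y i - x i < r}
      (fun x : Fin N → ℝ =>
        (1 / 2) * (x ⬝ᵥ L.mulVec x) +
          (γ / 2) * (1 - (1 / (N : ℝ)) * ∑ i, Real.exp (-(ρ * |y i - x i| ^ α)))) := by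
  set s : Set (Fin N → ℝ) := {x : Fin N → ℝ | ∀ i, 0 < y i - x i ∧ y i - x i < r} with hs
  have hsconv : Convex ℝ s := by
    have hseq : s = ⋂ i, (LinearMap.proj i : (Fin N → ℝ) →ₗ[ℝ] ℝ) ⁻¹'
        Set.Ioo (y i - r) (y i) := by
      ext x
      simp only [hs, Set.mem_setOf_eq, Set.mem_iInter, Set.mem_preimage, Set.mem_Ioo,
        LinearMap.proj_apply]
      constructor <;> intro h i <;> exact ⟨by linarith [(h i).1, (h i).2],
        by linarith [(h i).1, (h i).2]⟩
    rw [hseq]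
    exact convex_iInter fun i => (convex_Ioo _ _).linear_preimage _
  -- affine maps x ↦ y i - x i
  have hAff : ∀ i : Fin N, ConvexOn ℝ s
      (fun x : Fin N → ℝ => -Real.exp (-(ρ * (y i - x i) ^ α))) := by
    intro i
    let A : (Fin N → ℝ) →ᵃ[ℝ] ℝ :=
      { toFun := fun x => y i - x i
        linear := -(LinearMap.proj i)
        map_vadd' := by
          intro p v
          simp only [vadd_eq_add, Pi.add_apply, LinearMap.neg_apply, LinearMap.proj_apply]
          ring }
    have hc := (aux_exp_convex hα hρ hr).comp_affineMap A
    have hsub : s ⊆ A ⁻¹' Set.Ioo (0:ℝ) r := by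
      intro x hx
      exact ⟨(hx i).1, (hx i).2⟩
    exact (hc.subset hsub hsconv).congr fun x _ => rfl
  have hγN : 0 ≤ γ / (2 * (N : ℝ)) := by positivity
  have hsum : ConvexOn ℝ s (fun x : Fin N → ℝ =>
      ∑ i, γ / (2 * (N : ℝ)) * -Real.exp (-(ρ * (y i - x i) ^ α))) := by
    refine aux_sum_convex hsconv Finset.univ _ fun i _ => ?_
    have := (hAff i).smul hγN
    simpa [smul_eq_mul] using this
  have hquad : ConvexOn ℝ s (fun x : Fin N → ℝ => (1 / 2 : ℝ) * (x ⬝ᵥ L.mulVec x)) := by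
    have := ((aux_quad_convex L hLsymm hLpsd).subset (Set.subset_univ s) hsconv).smul
      (by norm_num : (0:ℝ) ≤ 1 / 2)
    simpa [smul_eq_mul] using this
  have hG : ConvexOn ℝ s (fun x : Fin N → ℝ =>
      (1 / 2 : ℝ) * (x ⬝ᵥ L.mulVec x) +
        (γ / 2 + ∑ i, γ / (2 * (N : ℝ)) * -Real.exp (-(ρ * (y i - x i) ^ α)))) :=
    hquad.add ((convexOn_const _ hsconv).add hsum)
  refine hG.congr fun x hx => ?_
  have habs : ∀ i : Fin N, |y i - x i| = y i - x i := fun i => abs_of_pos (hx i).1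
  simp only [habs]
  have hNne : (N : ℝ) ≠ 0 := by
    have : (0:ℕ) < N := hN
    exact_mod_cast this.ne'
  rw [← Finset.mul_sum]
  rw [Finset.sum_neg_distrib]
  field_simp
  ring
end
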